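/- Let N ∈ ℝ^{r×r} be invertible and let K̂ ∈ ℝ^{n×n} be the block-constant matrix built from N with blocks of sizes n₁,…,n_r ≥ 1 as above. Then every nonzero eigenvalue of K̂ has absolute value at least (min_a n_a)/‖N^{-1}‖, where ‖·‖ is the operator norm. -/

import Mathlib

/-!
An eigenvector `v` of `K̂` for `μ ≠ 0` lies in the range of `K̂`, whose rows are constant on blocks,
so `v = w ∘ Sigma.fst`. Summing `v` over the blocks turns `K̂ v = μ v` into `N D w = μ w` with
`D = diagonal (n_a)`, i.e. `D w = μ N⁻¹ w`, and comparing norms gives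
`(min_a n_a) ‖w‖ ≤ ‖D w‖ ≤ |μ| ‖N⁻¹‖ ‖w‖`.
-/

open Matrix Module.End

namespace Matrix

variable {κ : Type*} [Fintype κ] {β : κ → Type*} [∀ a, Fintype (β a)]

theorem submatrix_fst_fst_mulVec {R : Type*} [NonUnitalNonAssocSemiring R] (N : Matrix κ κ R)
    (v : (Σ a, β a) → R) :
    N.submatrix Sigma.fst Sigma.fst *ᵥ v =
      fun p : Σ a, β a => (N *ᵥ fun b => ∑ j, v ⟨b, j⟩) p.1 := by
  ext p
  simp only [mulVec, dotProduct, submatrix_apply, Fintype.sum_sigma, Finset.mul_sum]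

theorem hasEigenvalue_mul_diagonal_card_of_hasEigenvalue_submatrix_fst {K : Type*} [Field K]
    [DecidableEq κ] [∀ a, DecidableEq (β a)] {N : Matrix κ κ K} {μ : K} (hμ : μ ≠ 0)
    (h : HasEigenvalue (toLin' (N.submatrix Sigma.fst Sigma.fst : Matrix (Σ a, β a) _ K)) μ) :
    HasEigenvalue (toLin' (N * diagonal fun a => (Fintype.card (β a) : K))) μ := by
  obtain ⟨v, hv⟩ := h.exists_hasEigenvector
  have hv_apply : N.submatrix Sigma.fst Sigma.fst *ᵥ v = μ • v := hv.apply_eq_smul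
  set s : κ → K := fun b => ∑ j, v ⟨b, j⟩
  set w : κ → K := μ⁻¹ • N *ᵥ s
  have hvw : v = fun p => w p.1 := by
    ext p
    have := congrFun hv_apply p
    rw [submatrix_fst_fst_mulVec] at this
    simp only [Pi.smul_apply, smul_eq_mul] at this
    simp only [w, s, Pi.smul_apply, smul_eq_mul, this, inv_mul_cancel_left₀ hμ]
  have hs : s = diagonal (fun a => (Fintype.card (β a) : K)) *ᵥ w := by
    ext b
    simp [s, hvw, mulVec_diagonal]
  refine hasEigenvalue_of_hasEigenvector (x := w) ⟨mem_eigenspace_iff.mpr ?_, ?_⟩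
  · rw [toLin'_apply, ← mulVec_mulVec, ← hs]
    simp [w, smul_smul, hμ]
  · intro hw
    exact hv.2 (by rw [hvw, hw]; rfl)

section L2

variable {𝕜 : Type*} [RCLike 𝕜] {n : Type*} [Fintype n] [DecidableEq n]

theorem mul_norm_le_norm_toEuclideanCLM_diagonal {d : n → 𝕜} {c : ℝ} (hc : 0 ≤ c)
    (hd : ∀ i, c ≤ ‖d i‖) (x : EuclideanSpace 𝕜 n) :
    c * ‖x‖ ≤ ‖toEuclideanCLM (𝕜 := 𝕜) (diagonal d) x‖ := by
  refine (sq_le_sq₀ (by positivity) (norm_nonneg _)).mp ?_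
  simp only [mul_pow, EuclideanSpace.norm_sq_eq, ofLp_toEuclideanCLM, mulVec_diagonal, norm_mul,
    Finset.mul_sum]
  gcongr with i
  exact hd i

theorem le_norm_mul_norm_inv_of_hasEigenvalue_mul_diagonal {N : Matrix n n 𝕜} (hN : IsUnit N)
    {d : n → 𝕜} {c : ℝ} (hc : 0 ≤ c) (hd : ∀ i, c ≤ ‖d i‖) {μ : 𝕜}
    (h : HasEigenvalue (toLin' (N * diagonal d)) μ) :
    c ≤ ‖μ‖ * ‖toEuclideanCLM (𝕜 := 𝕜) N⁻¹‖ := by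
  obtain ⟨w, hw⟩ := h.exists_hasEigenvector
  have hdw : diagonal d *ᵥ w = μ • N⁻¹ *ᵥ w := by
    have hNdw : (N * diagonal d) *ᵥ w = μ • w := hw.apply_eq_smul
    rw [← mulVec_smul, ← hNdw, mulVec_mulVec,
      nonsing_inv_mul_cancel_left _ _ ((isUnit_iff_isUnit_det N).mp hN)]
  set x : EuclideanSpace 𝕜 n := WithLp.toLp 2 w
  have hx : 0 < ‖x‖ := norm_pos_iff.mpr fun h => hw.2 (by simpa [x] using h)
  refine le_of_mul_le_mul_right ?_ hx
  calc c * ‖x‖ ≤ ‖toEuclideanCLM (𝕜 := 𝕜) (diagonal d) x‖ :=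
        mul_norm_le_norm_toEuclideanCLM_diagonal hc hd x
    _ = ‖μ • toEuclideanCLM (𝕜 := 𝕜) N⁻¹ x‖ := by
        rw [toEuclideanCLM_toLp, toEuclideanCLM_toLp, hdw, WithLp.toLp_smul]
    _ ≤ ‖μ‖ * ‖toEuclideanCLM (𝕜 := 𝕜) N⁻¹‖ * ‖x‖ := by
        rw [norm_smul, mul_assoc]
        gcongr
        exact (toEuclideanCLM (𝕜 := 𝕜) N⁻¹).le_opNorm x

end L2

end Matrix

theorem stmt9_general {r : ℕ} (hr : 0 < r) (N : Matrix (Fin r) (Fin r) ℝ)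
    (hinv : IsUnit N) (m : Fin r → ℕ) :
    ∀ μ : ℝ, μ ≠ 0 →
      Module.End.HasEigenvalue
        (Matrix.toLin' ((fun i j => N i.1 j.1)
          : Matrix ((a : Fin r) × Fin (m a)) ((a : Fin r) × Fin (m a)) ℝ)) μ →
      ((Finset.univ.inf' ⟨⟨0, hr⟩, Finset.mem_univ _⟩ m : ℕ) : ℝ)
          / ‖Matrix.toEuclideanCLM (𝕜 := ℝ) N⁻¹‖ ≤ |μ| := by
  intro μ hμ heig
  refine div_le_of_le_mul₀ (norm_nonneg _) (abs_nonneg μ) ?_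
  rw [← Real.norm_eq_abs]
  refine le_norm_mul_norm_inv_of_hasEigenvalue_mul_diagonal hinv (Nat.cast_nonneg _) (fun a => ?_)
    (hasEigenvalue_mul_diagonal_card_of_hasEigenvalue_submatrix_fst hμ heig)
  simpa using Finset.inf'_le m (Finset.mem_univ a)

/-- For `N ∈ ℝ^{r×r}` symmetric invertible and `K̂` the block-constant
matrix built from `N` with block sizes `n₁,…,n_r ≥ 1`, every nonzero eigenvalue `μ`
of `K̂` satisfies `(min_a n_a)/‖N⁻¹‖ ≤ |μ|` (operator norm). -/
theorem stmt9 {r : ℕ} (hr : 0 < r) (N : Matrix (Fin r) (Fin r) ℝ) (hsymm : N.IsSymm)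
    (hinv : IsUnit N) (m : Fin r → ℕ) (hm : ∀ a, 0 < m a) :
    ∀ μ : ℝ, μ ≠ 0 →
      Module.End.HasEigenvalue
        (Matrix.toLin' ((fun i j => N i.1 j.1)
          : Matrix ((a : Fin r) × Fin (m a)) ((a : Fin r) × Fin (m a)) ℝ)) μ →
      ((Finset.univ.inf' ⟨⟨0, hr⟩, Finset.mem_univ _⟩ m : ℕ) : ℝ)
          / ‖Matrix.toEuclideanCLM (𝕜 := ℝ) N⁻¹‖ ≤ |μ| :=
  stmt9_general hr N hinv m
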